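/- arXiv:2203.13435 — 4 statements merged into one kernel-verified Lean document; each statement's English description precedes it below -/
import Mathlib

section
/- Let T = (V, A) be a polytree and let X, Y ⊆ V with |X| = |Y|. There exists a directed path matching from X to Y (a family of directed paths with distinct sources forming X and distinct sinks forming Y) if and only if for every arc e ∈ A, w(e; X, Y) := |C⁻_e ∩ X| − |C⁻_e ∩ Y| ≥ 0. -/
open scoped Classical

variable {V : Type*}

/-- The underlying undirected simple graph of a digraph given by its arc relation. -/
def underlying (A : V → V → Prop) : SimpleGraph V := SimpleGraph.fromRel A

/-- A polytree: a loopless digraph without antiparallel arcs whose underlying graph is a tree. -/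
def IsPolytree (A : V → V → Prop) : Prop :=
  (∀ v, ¬ A v v) ∧ (∀ u v, A u v → ¬ A v u) ∧ (underlying A).IsTree

/-- `x` lies in the weakly connected component of `T - (a,b)` containing the tail `a`. -/
def InCminus (A : V → V → Prop) (a b x : V) : Prop :=
  ((underlying A).deleteEdges {s(a, b)}).Reachable a x

/-- `w((a,b); X, Y) = |C⁻ ∩ X| - |C⁻ ∩ Y|`. -/
noncomputable def wArc [Fintype V] [DecidableEq V] (A : V → V → Prop)
    (X Y : Finset V) (a b : V) : ℤ :=
  ((X.filter fun x => InCminus A a b x).card : ℤ) -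
    ((Y.filter fun x => InCminus A a b x).card : ℤ)

/-- Independence in the underlying undirected graph. -/
def IndepF (A : V → V → Prop) (I : Finset V) : Prop :=
  ∀ u ∈ I, ∀ v ∈ I, ¬ (underlying A).Adj u v

/-- One token-sliding step along an arc, in its direction. -/
def IsStep [DecidableEq V] (A : V → V → Prop) (I J : Finset V) : Prop :=
  ∃ u v, A u v ∧ I \ J = {u} ∧ J \ I = {v}

/-- A reconfiguration sequence of independent sets under directed token sliding. -/
def IsReconfSeq [DecidableEq V] (A : V → V → Prop) {ℓ : ℕ}
    (f : Fin (ℓ + 1) → Finset V) : Prop :=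
  (∀ i, IndepF A (f i)) ∧ ∀ i : Fin ℓ, IsStep A (f i.castSucc) (f i.succ)

/-- `I` is reconfigurable into `J` under directed token sliding. -/
def Reconfigurable [DecidableEq V] (A : V → V → Prop) (I J : Finset V) : Prop :=
  ∃ (ℓ : ℕ) (f : Fin (ℓ + 1) → Finset V),
    IsReconfSeq A f ∧ f 0 = I ∧ f (Fin.last ℓ) = J

/-- A directed path in the digraph `A`, given by its (distinct) vertices in order. -/
structure DirPath (A : V → V → Prop) where
  len : ℕ
  vtx : Fin (len + 1) → V
  inj : Function.Injective vtx
  arc : ∀ i : Fin len, A (vtx i.castSucc) (vtx i.succ)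

namespace DirPath
variable {A : V → V → Prop}
/-- The source of a directed path. -/
def src (p : DirPath A) : V := p.vtx 0
/-- The sink of a directed path. -/
def snk (p : DirPath A) : V := p.vtx (Fin.last p.len)
/-- The second vertex `s'(P)` of a directed path. -/
def sndVtx (p : DirPath A) : V := p.vtx ⟨min 1 p.len, by omega⟩
/-- The second-to-last vertex `t'(P)` of a directed path. -/
def penVtx (p : DirPath A) : V := p.vtx ⟨p.len - 1, by omega⟩
/-- `v` is a vertex of the path `p`. -/
def mem (p : DirPath A) (v : V) : Prop := ∃ i, p.vtx i = v
/-- `x` is an internal vertex of `p` (neither source nor sink). -/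
def internal (p : DirPath A) (x : V) : Prop :=
  ∃ i : Fin (p.len + 1), p.vtx i = x ∧ i ≠ 0 ∧ i ≠ Fin.last p.len
end DirPath

/-- A directed path matching from `X` to `Y`: distinct sources forming `X`,
distinct sinks forming `Y`. -/
def IsDPM [DecidableEq V] {A : V → V → Prop} {k : ℕ}
    (X Y : Finset V) (P : Fin k → DirPath A) : Prop :=
  (Function.Injective fun i => (P i).src) ∧ (Function.Injective fun i => (P i).snk) ∧
  (Finset.univ.image fun i => (P i).src) = X ∧ (Finset.univ.image fun i => (P i).snk) = Y

/-- The path-set conditions (P1)–(P4). -/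
def PathSetConds [DecidableEq V] {A : V → V → Prop} {k : ℕ}
    (X Y : Finset V) (P : Fin k → DirPath A) : Prop :=
  (∀ i, 2 ≤ (P i).len) ∧ IsDPM X Y P ∧
  (∀ i j, i ≠ j → (P i).sndVtx ≠ (P j).sndVtx) ∧
  (∀ i j, i ≠ j → (P i).penVtx ≠ (P j).penVtx)

/-- Length of the (unique, when it exists) directed path from `u` to `v`. -/
noncomputable def ddist (A : V → V → Prop) (u v : V) : ℕ :=
  sInf {n | ∃ p : DirPath A, p.src = u ∧ p.snk = v ∧ p.len = n}

/-- A biased path pair: a common internal vertex `x` with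
`dist(s(p),x) > dist(s(q),x)` and `dist(x,t(p)) > dist(x,t(q))`. -/
def BiasedPair (A : V → V → Prop) (p q : DirPath A) : Prop :=
  ∃ x, p.internal x ∧ q.internal x ∧
    ddist A q.src x < ddist A p.src x ∧ ddist A x q.snk < ddist A x p.snk

/-- A rigid token: `v ∈ X ∩ Y` and all incident arcs have `w`-value `0`. -/
def RigidTok [Fintype V] [DecidableEq V] (A : V → V → Prop) (X Y : Finset V) (v : V) : Prop :=
  v ∈ X ∧ v ∈ Y ∧ ∀ a b, A a b → (a = v ∨ b = v) → wArc A X Y a b = 0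

/-- A blocking arc: `w((u,v)) = 1` and every other arc incident to `u` or `v`
has `w`-value `0`. -/
def BlockingArc [Fintype V] [DecidableEq V] (A : V → V → Prop) (X Y : Finset V)
    (u v : V) : Prop :=
  A u v ∧ wArc A X Y u v = 1 ∧
    ∀ a b, A a b → (a, b) ≠ (u, v) → (a = u ∨ b = u ∨ a = v ∨ b = v) →
      wArc A X Y a b = 0

/-- A trajectory of a single token along a reconfiguration sequence. -/
def IsTrajectory [DecidableEq V] (A : V → V → Prop) {ℓ : ℕ}
    (f : Fin (ℓ + 1) → Finset V) (g : Fin (ℓ + 1) → V) : Prop :=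
  (∀ i, g i ∈ f i) ∧ ∀ i : Fin ℓ,
    g i.succ = g i.castSucc ∨
      (f i.castSucc \ f i.succ = {g i.castSucc} ∧ f i.succ \ f i.castSucc = {g i.succ})

/-- Number of steps of a reconfiguration sequence sliding a token from `u` to `v`. -/
noncomputable def movesAlong [DecidableEq V] {ℓ : ℕ} (f : Fin (ℓ + 1) → Finset V)
    (u v : V) : ℕ :=
  (Finset.univ.filter fun i : Fin ℓ =>
    f i.castSucc \ f i.succ = {u} ∧ f i.succ \ f i.castSucc = {v}).card

/-- Number of forward arc traversals of a walk with vertex list `l`. -/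
noncomputable def fwdCount (A : V → V → Prop) (l : List V) : ℕ :=
  (l.zip l.tail).countP fun p => decide (A p.1 p.2)

/-- Number of reverse arc traversals of a walk with vertex list `l`. -/
noncomputable def revCount (A : V → V → Prop) (l : List V) : ℕ :=
  (l.zip l.tail).countP fun p => decide (A p.2 p.1)

/-- Number of traversals of the ordered pair `(a, b)` by a walk with vertex list `l`. -/
def traverseCount [DecidableEq V] (l : List V) (a b : V) : ℕ :=
  (l.zip l.tail).count (a, b)

/-- A vertex `v` touches a directed path `p` if `N[v]` meets the vertex set of `p`. -/
def Touches (A : V → V → Prop) (v : V) (p : DirPath A) : Prop :=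
  ∃ u, p.mem u ∧ (u = v ∨ (underlying A).Adj v u)

/-- Independence in an undirected graph (for undirected token sliding). -/
def UIndep (G : SimpleGraph V) (I : Finset V) : Prop :=
  ∀ u ∈ I, ∀ v ∈ I, ¬ G.Adj u v

/-- One undirected token-sliding step along an edge. -/
def UIsStep [DecidableEq V] (G : SimpleGraph V) (I J : Finset V) : Prop :=
  ∃ u v, G.Adj u v ∧ I \ J = {u} ∧ J \ I = {v}

/-- Reconfigurability under (undirected) token sliding. -/
def UReconfigurable [DecidableEq V] (G : SimpleGraph V) (I J : Finset V) : Prop :=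
  ∃ (ℓ : ℕ) (f : Fin (ℓ + 1) → Finset V),
    (∀ i, UIndep G (f i)) ∧ (∀ i : Fin ℓ, UIsStep G (f i.castSucc) (f i.succ)) ∧
    f 0 = I ∧ f (Fin.last ℓ) = J

/-!
`w` is a flow from `X` to `Y` on `T`: the net `w`-inflow at a vertex `v` is `[v ∈ Y] - [v ∈ X]`.

Necessity: the only arc between `C⁻_e` and its complement is `e`, which points out of `C⁻_e`,
so every path of the matching ending in `C⁻_e` also starts there.

Sufficiency: by flow conservation and `w ≥ 0`, a vertex `y ∈ Y \ X` has an incoming arc with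
`w ≥ 1`, and so does the tail of such an arc unless it lies in `X`. Following these arcs
backwards (the side `C⁻` strictly shrinks) gives a directed path from `X` to `y` all of whose
arcs have `w ≥ 1`. Deleting its source from `X` and its sink from `Y` keeps `w ≥ 0`, since `w`
drops only on arcs of the path; induct on `|X|`.
-/

section Tuple

open Finset

lemma Fin.exists_castSucc_and_not_succ {n : ℕ} {P : Fin (n + 1) → Prop} (h0 : P 0)
    (hlast : ¬ P (Fin.last n)) : ∃ i : Fin n, P i.castSucc ∧ ¬ P i.succ := by
  by_contra! h
  exact hlast (Fin.induction (motive := P) h0 h _)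

lemma Fin.cons_injective_and_image_univ {α : Type*} [DecidableEq α] {n : ℕ} {s : Finset α}
    {x : α} {f : Fin n → α} (hx : x ∈ s) (hf : Function.Injective f)
    (himg : univ.image f = s.erase x) :
    Function.Injective (Fin.cons x f : Fin (n + 1) → α) ∧ univ.image (Fin.cons x f) = s := by
  have hrange : Set.range f = ↑(s.erase x) := by
    rw [← himg, coe_image, coe_univ, Set.image_univ]
  refine ⟨Fin.cons_injective_iff.mpr ⟨fun h => ?_, hf⟩, ?_⟩
  · rw [hrange] at h
    exact (mem_erase.mp h).1 rfl
  · rw [← coe_inj, coe_image, coe_univ, Set.image_univ, Fin.range_cons, hrange, coe_erase,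
      Set.insert_sdiff_singleton, Set.insert_eq_of_mem (mem_coe.mpr hx)]

end Tuple

namespace SimpleGraph

variable {G : SimpleGraph V} {a b u u' v x : V}

/-- `InCminus A a b` is, by definition, `(underlying A).EdgeSide a b`. -/
def EdgeSide (G : SimpleGraph V) (a b x : V) : Prop :=
  (G.deleteEdges {s(a, b)}).Reachable a x

lemma edgeSide_self : G.EdgeSide a b a := Reachable.refl a

lemma edgeSide_iff_of_adj (h : G.Adj u v) (hne : s(u, v) ≠ s(a, b)) :
    G.EdgeSide a b u ↔ G.EdgeSide a b v := by
  have h' : (G.deleteEdges {s(a, b)}).Adj u v := by simp [h, hne]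
  exact ⟨fun hu => hu.trans h'.reachable, fun hv => hv.trans h'.symm.reachable⟩

lemma Preconnected.edgeSide_or (hG : G.Preconnected) (a b x : V) :
    G.EdgeSide a b x ∨ G.EdgeSide b a x := by
  have hclosed : ∀ y z, G.Adj y z → (G.EdgeSide a b y ∨ G.EdgeSide b a y) →
      G.EdgeSide a b z ∨ G.EdgeSide b a z := by
    intro y z h hy
    by_cases he : s(y, z) = s(a, b)
    · rcases Sym2.eq_iff.mp he with ⟨-, rfl⟩ | ⟨-, rfl⟩
      · exact Or.inr edgeSide_self
      · exact Or.inl edgeSide_self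
    · have he' : s(y, z) ≠ s(b, a) := fun e => he (e.trans Sym2.eq_swap)
      rwa [← edgeSide_iff_of_adj h he, ← edgeSide_iff_of_adj h he']
  induction (reachable_iff_reflTransGen a x).mp (hG a x) with
  | refl => exact Or.inl edgeSide_self
  | tail _ hyz ih => exact hclosed _ _ hyz ih

lemma IsAcyclic.not_edgeSide (hG : G.IsAcyclic) (h : G.Adj a b) : ¬ G.EdgeSide a b b :=
  isBridge_iff.mp (isAcyclic_iff_forall_adj_isBridge.mp hG h)

lemma IsTree.edgeSide_iff_not (hG : G.IsTree) (h : G.Adj a b) :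
    G.EdgeSide a b x ↔ ¬ G.EdgeSide b a x := by
  refine ⟨fun ha hb => hG.isAcyclic.not_edgeSide h ?_,
    (hG.connected.preconnected.edgeSide_or a b x).resolve_right⟩
  rw [EdgeSide, Sym2.eq_swap] at hb
  exact ha.trans hb.symm

lemma IsAcyclic.exists_isPath_cons (hG : G.IsAcyclic) (h : G.Adj v u) (hx : G.EdgeSide u v x) :
    ∃ q : G.Walk u x, (Walk.cons h q).IsPath := by
  obtain ⟨q⟩ := hx
  refine ⟨q.bypass.mapLe (G.deleteEdges_le _), ?_⟩
  rw [Walk.cons_isPath_iff, Walk.support_mapLe_eq_support]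
  exact ⟨q.bypass_isPath.mapLe _,
    fun hv => hG.not_edgeSide h.symm ⟨q.bypass.takeUntil v hv⟩⟩

lemma IsAcyclic.eq_of_edgeSide (hG : G.IsAcyclic) (h : G.Adj v u) (h' : G.Adj v u')
    (hx : G.EdgeSide u v x) (hx' : G.EdgeSide u' v x) : u = u' := by
  obtain ⟨q, hq⟩ := hG.exists_isPath_cons h hx
  obtain ⟨q', hq'⟩ := hG.exists_isPath_cons h' hx'
  have := (hG.subsingleton_path v x).elim ⟨_, hq⟩ ⟨_, hq'⟩
  simpa using congrArg (fun p : G.Path v x => p.1.snd) this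

lemma IsTree.exists_adj_edgeSide (hG : G.IsTree) (hx : x ≠ v) :
    ∃ u, G.Adj v u ∧ G.EdgeSide u v x := by
  obtain ⟨p, hp⟩ := (hG.connected.preconnected v x).some.toPath
  obtain ⟨u, h, q, rfl⟩ := Walk.exists_eq_cons_of_ne hx.symm p
  rw [Walk.cons_isPath_iff] at hp
  refine ⟨u, h, ⟨q.toDeleteEdges _ fun e he hmem => hp.2 ?_⟩⟩
  rw [Set.mem_singleton_iff] at hmem
  subst hmem
  exact q.snd_mem_support_of_mem_edges he

lemma IsTree.edgeSide_of_edgeSide (hG : G.IsTree) (ht : G.Adj u a) (hv : G.Adj u v)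
    (hav : a ≠ v) (hx : G.EdgeSide a u x) : G.EdgeSide u v x := by
  by_contra h
  exact hav (hG.isAcyclic.eq_of_edgeSide ht hv hx ((hG.edgeSide_iff_not hv.symm).mpr h))

lemma IsTree.card_erase_eq_sum_edgeSide [Fintype V] [DecidableEq V] (hG : G.IsTree)
    (Z : Finset V) (v : V) :
    (Z.erase v).card = ∑ u ∈ G.neighborFinset v, (Z.filter (G.EdgeSide u v)).card := by
  have hpart : Z.erase v = (G.neighborFinset v).biUnion fun u => Z.filter (G.EdgeSide u v) := by
    ext x
    simp only [Finset.mem_erase, Finset.mem_biUnion, Finset.mem_filter, mem_neighborFinset]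
    constructor
    · rintro ⟨hxv, hxZ⟩
      obtain ⟨u, h, hx⟩ := hG.exists_adj_edgeSide hxv
      exact ⟨u, h, hxZ, hx⟩
    · rintro ⟨u, h, hxZ, hx⟩
      exact ⟨fun hxv => hG.isAcyclic.not_edgeSide h.symm (hxv ▸ hx), hxZ⟩
  rw [hpart, Finset.card_biUnion]
  intro u hu u' hu' hne
  refine Finset.disjoint_filter.mpr fun x _ hx hx' => hne ?_
  exact hG.isAcyclic.eq_of_edgeSide ((mem_neighborFinset _ _ _).mp hu)
    ((mem_neighborFinset _ _ _).mp hu') hx hx'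

end SimpleGraph

namespace DirPath

variable {A R : V → V → Prop}

def single (y : V) : DirPath A where
  len := 0
  vtx _ := y
  inj _ _ _ := Subsingleton.elim (α := Fin 1) _ _
  arc i := i.elim0

def snoc (p : DirPath A) (a : V) (ha : A p.snk a) (hp : ¬ p.mem a) : DirPath A where
  len := p.len + 1
  vtx := Fin.snoc p.vtx a
  inj := Fin.snoc_injective_iff.mpr ⟨p.inj, hp⟩
  arc := Fin.lastCases (by simpa [snk] using ha) fun i => by
    rw [Fin.succ_castSucc, Fin.snoc_castSucc, Fin.snoc_castSucc]
    exact p.arc i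

variable (p : DirPath A) {a : V} (ha : A p.snk a) (hp : ¬ p.mem a)

@[simp] lemma snoc_src : (p.snoc a ha hp).src = p.src :=
  Fin.snoc_castSucc (α := fun _ => V) (p := p.vtx) (x := a) 0
@[simp] lemma snoc_snk : (p.snoc a ha hp).snk = a := by simp [snoc, snk]

lemma mem_snoc {x : V} : (p.snoc a ha hp).mem x ↔ p.mem x ∨ x = a := by
  simp [snoc, mem, Fin.exists_fin_succ', eq_comm]

def mapLe (p : DirPath R) (h : ∀ u v, R u v → A u v) : DirPath A where
  len := p.len
  vtx := p.vtx
  inj := p.inj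
  arc i := h _ _ (p.arc i)

end DirPath

section Matching

open Finset

variable [DecidableEq V] {A : V → V → Prop} {X Y : Finset V} {k : ℕ}

lemma IsDPM.cons {p : DirPath A} {P : Fin k → DirPath A} (hx : p.src ∈ X)
    (hy : p.snk ∈ Y) (hP : IsDPM (X.erase p.src) (Y.erase p.snk) P) :
    IsDPM X Y (Fin.cons p P : Fin (k + 1) → DirPath A) := by
  obtain ⟨hsrc, hsnk, himg_src, himg_snk⟩ := hP
  have hs := Fin.cons_injective_and_image_univ hx hsrc himg_src
  have ht := Fin.cons_injective_and_image_univ hy hsnk himg_snk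
  have hcons : ∀ g : DirPath A → V,
      (fun i => g ((Fin.cons p P : Fin (k + 1) → DirPath A) i)) =
        Fin.cons (g p) fun i => g (P i) :=
    fun g => funext fun i => by cases i using Fin.cases <;> rfl
  simp only [IsDPM, hcons]
  exact ⟨hs.1, ht.1, hs.2, ht.2⟩

lemma IsDPM.card_filter_snk {P : Fin k → DirPath A} (hP : IsDPM X Y P)
    (S : V → Prop) : (Y.filter S).card = (univ.filter fun i => S (P i).snk).card := by
  rw [← hP.2.2.2, filter_image, card_image_of_injective _ hP.2.1]

lemma IsDPM.card_filter_src {P : Fin k → DirPath A} (hP : IsDPM X Y P)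
    (S : V → Prop) : (X.filter S).card = (univ.filter fun i => S (P i).src).card := by
  rw [← hP.2.2.1, filter_image, card_image_of_injective _ hP.1]

end Matching

namespace IsPolytree

open SimpleGraph

variable {A : V → V → Prop} {a b u v : V}

lemma isTree (hT : IsPolytree A) : (underlying A).IsTree := hT.2.2

lemma adj (hT : IsPolytree A) (h : A u v) : (underlying A).Adj u v :=
  (SimpleGraph.fromRel_adj _ _ _).mpr ⟨fun e => hT.1 u (e ▸ h), Or.inl h⟩

lemma inCminus_iff_of_arc (hT : IsPolytree A) (hab : A a b) (huv : A u v)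
    (hne : (u, v) ≠ (a, b)) : InCminus A a b u ↔ InCminus A a b v := by
  refine edgeSide_iff_of_adj (hT.adj huv) fun he => ?_
  rcases Sym2.eq_iff.mp he with ⟨rfl, rfl⟩ | ⟨rfl, rfl⟩
  · exact hne rfl
  · exact hT.2.1 _ _ hab huv

lemma inCminus_of_arc (hT : IsPolytree A) (hab : A a b) (huv : A u v)
    (hv : InCminus A a b v) : InCminus A a b u := by
  by_cases hne : (u, v) = (a, b)
  · obtain ⟨rfl, rfl⟩ := Prod.mk.inj hne
    exact edgeSide_self
  · exact (hT.inCminus_iff_of_arc hab huv hne).mpr hv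

lemma src_inCminus_of_snk (hT : IsPolytree A) (hab : A a b) (p : DirPath A)
    (h : InCminus A a b p.snk) : InCminus A a b p.src := by
  by_contra hs
  obtain ⟨i, hi, hi'⟩ := Fin.exists_castSucc_and_not_succ
    (P := fun i => ¬ InCminus A a b (p.vtx i)) hs (not_not.mpr h)
  exact hi (hT.inCminus_of_arc hab (p.arc i) (not_not.mp hi'))

lemma exists_arc_eq_of_inCminus_src (hT : IsPolytree A) (hab : A a b) (p : DirPath A)
    (hs : InCminus A a b p.src) (ht : ¬ InCminus A a b p.snk) :
    ∃ i : Fin p.len, p.vtx i.castSucc = a ∧ p.vtx i.succ = b := by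
  obtain ⟨i, hi, hi'⟩ :=
    Fin.exists_castSucc_and_not_succ (P := fun i => InCminus A a b (p.vtx i)) hs ht
  by_contra! hne
  have hi_ne : (p.vtx i.castSucc, p.vtx i.succ) ≠ (a, b) := fun h =>
    hne i (congrArg Prod.fst h) (congrArg Prod.snd h)
  exact hi' ((hT.inCminus_iff_of_arc hab (p.arc i) hi_ne).mp hi)

end IsPolytree

section Flow

open SimpleGraph Finset

variable [Fintype V] [DecidableEq V] {A : V → V → Prop} {X Y : Finset V}

lemma wArc_erase_erase {x y : V} (hx : x ∈ X) (hy : y ∈ Y) (a b : V) :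
    wArc A (X.erase x) (Y.erase y) a b =
      wArc A X Y a b - (if InCminus A a b x then 1 else 0) +
        (if InCminus A a b y then 1 else 0) := by
  have hcard : ∀ {s : Finset V} {z : V}, z ∈ s →
      (((s.erase z).filter (InCminus A a b)).card : ℤ) =
        (s.filter (InCminus A a b)).card - if InCminus A a b z then 1 else 0 := by
    intro s z hz
    rw [filter_erase]
    split_ifs with h
    · exact cast_card_erase_of_mem (mem_filter.mpr ⟨hz, h⟩)
    · rw [erase_eq_of_notMem fun hm => h (mem_filter.mp hm).2, sub_zero]
  simp only [wArc]
  rw [hcard hx, hcard hy]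
  ring

def PositiveArc (A : V → V → Prop) (X Y : Finset V) (u v : V) : Prop :=
  A u v ∧ 0 < wArc A X Y u v

namespace IsPolytree

theorem sum_wArc_in_sub_sum_wArc_out (hT : IsPolytree A) (hXY : X.card = Y.card)
    (v : V) :
    ∑ u ∈ univ.filter (A · v), wArc A X Y u v -
        ∑ b ∈ univ.filter (A v ·), wArc A X Y v b =
      (if v ∈ Y then 1 else 0) - (if v ∈ X then 1 else 0) := by
  set G := underlying A
  let d : V → ℤ := fun u =>
    ((X.filter (G.EdgeSide u v)).card : ℤ) - (Y.filter (G.EdgeSide u v)).card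
  have hin : ∀ u ∈ univ.filter (A · v), d u = wArc A X Y u v := fun _ _ => rfl
  have hout : ∀ b ∈ univ.filter (A v ·), d b = - wArc A X Y v b := by
    intro b hb
    have hside : ∀ Z : Finset V, ((Z.filter (G.EdgeSide b v)).card : ℤ) =
        Z.card - (Z.filter fun x => InCminus A v b x).card := by
      intro Z
      have hadj := (hT.adj (mem_filter.mp hb).2).symm
      rw [eq_sub_iff_add_eq, ← Nat.cast_add, Nat.cast_inj,
        ← card_filter_add_card_filter_not (fun x => InCminus A v b x) (s := Z), add_comm]
      congr 2
      exact filter_congr fun x _ => hT.isTree.edgeSide_iff_not hadj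
    simp only [d, wArc, hside]
    omega
  have hnbr : G.neighborFinset v = univ.filter (A · v) ∪ univ.filter (A v ·) := by
    ext u
    rw [mem_neighborFinset]
    simp only [G, underlying, fromRel_adj, mem_union, mem_filter, mem_univ, true_and]
    refine ⟨fun h => h.2.symm, fun h => ⟨?_, h.symm⟩⟩
    rintro rfl
    exact h.elim (hT.1 _) (hT.1 _)
  have hdisj : Disjoint (univ.filter (A · v)) (univ.filter (A v ·)) :=
    disjoint_filter.mpr fun u _ h h' => hT.2.1 _ _ h h'
  have hsum : ∑ u ∈ G.neighborFinset v, d u = (X.erase v).card - (Y.erase v).card := by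
    rw [hT.isTree.card_erase_eq_sum_edgeSide X v, hT.isTree.card_erase_eq_sum_edgeSide Y v]
    push_cast
    exact sum_sub_distrib ..
  rw [hnbr, sum_union hdisj, sum_congr rfl hin, sum_congr rfl hout, sum_neg_distrib] at hsum
  rw [← sub_eq_add_neg] at hsum
  rw [hsum]
  by_cases hvX : v ∈ X <;> by_cases hvY : v ∈ Y <;>
    simp only [hvX, hvY, cast_card_erase_of_mem, erase_eq_of_notMem, not_false_eq_true,
      if_true, if_false, hXY] <;> ring

lemma exists_positiveArc_into (hT : IsPolytree A) (hXY : X.card = Y.card)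
    (hw : ∀ a b, A a b → 0 ≤ wArc A X Y a b) {v : V} (hvX : v ∉ X)
    (hv : v ∈ Y ∨ ∃ b, PositiveArc A X Y v b) : ∃ u, PositiveArc A X Y u v := by
  by_contra! h
  have hin : ∑ u ∈ univ.filter (A · v), wArc A X Y u v ≤ 0 :=
    sum_nonpos fun u hu => not_lt.mp fun hpos => h u ⟨(mem_filter.mp hu).2, hpos⟩
  have hout : 0 ≤ ∑ b ∈ univ.filter (A v ·), wArc A X Y v b :=
    sum_nonneg fun b hb => hw v b (mem_filter.mp hb).2
  have hflow := hT.sum_wArc_in_sub_sum_wArc_out hXY v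
  rw [if_neg hvX] at hflow
  rcases hv with hvY | ⟨b, hb, hwb⟩
  · rw [if_pos hvY] at hflow
    linarith
  · have := single_le_sum (fun b hb => hw v b (mem_filter.mp hb).2)
      (mem_filter.mpr ⟨mem_univ b, hb⟩)
    split_ifs at hflow <;> linarith

theorem exists_positivePath_to_tail (hT : IsPolytree A) (hXY : X.card = Y.card)
    (hw : ∀ a b, A a b → 0 ≤ wArc A X Y a b) {u v : V} (huv : PositiveArc A X Y u v) :
    ∃ p : DirPath (PositiveArc A X Y), p.src ∈ X ∧ p.snk = u ∧
      ∀ x, p.mem x → InCminus A u v x := by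
  by_cases huX : u ∈ X
  · exact ⟨DirPath.single u, huX, rfl, fun x ⟨_, hx⟩ => hx ▸ edgeSide_self⟩
  obtain ⟨t, htu⟩ := hT.exists_positiveArc_into hXY hw huX (Or.inr ⟨v, huv⟩)
  have htv : t ≠ v := fun h => hT.2.1 u v huv.1 (h ▸ htu.1)
  have hsub : ∀ x, InCminus A t u x → InCminus A u v x := fun x =>
    hT.isTree.edgeSide_of_edgeSide (hT.adj htu.1).symm (hT.adj huv.1) htv
  have hu : ¬ InCminus A t u u := hT.isTree.isAcyclic.not_edgeSide (hT.adj htu.1)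
  obtain ⟨p, hpX, hpt, hpC⟩ := exists_positivePath_to_tail hT hXY hw htu
  refine ⟨p.snoc u (hpt ▸ htu) fun hm => hu (hpC u hm), by simpa using hpX, by simp,
    fun x hx => ?_⟩
  rcases (DirPath.mem_snoc ..).mp hx with hx | rfl
  · exact hsub x (hpC x hx)
  · exact edgeSide_self
termination_by (univ.filter (InCminus A u v)).card
decreasing_by
  refine card_lt_card ⟨fun x hx => mem_filter.mpr ⟨mem_univ x, hsub x (mem_filter.mp hx).2⟩,
    fun h => hu (mem_filter.mp (h (mem_filter.mpr ⟨mem_univ u, edgeSide_self⟩))).2⟩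

theorem exists_positivePath_to (hT : IsPolytree A) (hXY : X.card = Y.card)
    (hw : ∀ a b, A a b → 0 ≤ wArc A X Y a b) {y : V} (hy : y ∈ Y) :
    ∃ p : DirPath (PositiveArc A X Y), p.src ∈ X ∧ p.snk = y := by
  by_cases hyX : y ∈ X
  · exact ⟨DirPath.single y, hyX, rfl⟩
  obtain ⟨u, huy⟩ := hT.exists_positiveArc_into hXY hw hyX (Or.inl hy)
  obtain ⟨p, hpX, hpu, hpC⟩ := hT.exists_positivePath_to_tail hXY hw huy
  have hy : ¬ InCminus A u y y := hT.isTree.isAcyclic.not_edgeSide (hT.adj huy.1)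
  exact ⟨p.snoc y (hpu ▸ huy) fun hm => hy (hpC y hm), by simpa using hpX, by simp⟩

lemma wArc_erase_erase_nonneg (hT : IsPolytree A)
    (hw : ∀ a b, A a b → 0 ≤ wArc A X Y a b) (p : DirPath (PositiveArc A X Y))
    (hx : p.src ∈ X) (hy : p.snk ∈ Y) {a b : V} (hab : A a b) :
    0 ≤ wArc A (X.erase p.src) (Y.erase p.snk) a b := by
  let q : DirPath A := p.mapLe fun _ _ h => h.1
  have := hw a b hab
  rw [wArc_erase_erase hx hy]
  by_cases ht : InCminus A a b p.snk
  · have hs : InCminus A a b p.src := hT.src_inCminus_of_snk hab q ht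
    rw [if_pos hs, if_pos ht]
    omega
  by_cases hs : InCminus A a b p.src
  · obtain ⟨i, hia, hib⟩ : ∃ i : Fin p.len, p.vtx i.castSucc = a ∧ p.vtx i.succ = b :=
      hT.exists_arc_eq_of_inCminus_src hab q hs ht
    have hpos := (p.arc i).2
    rw [hia, hib] at hpos
    rw [if_pos hs, if_neg ht]
    omega
  · rw [if_neg hs, if_neg ht]
    omega

theorem exists_isDPM (hT : IsPolytree A) {k : ℕ} (hX : X.card = k) (hY : Y.card = k)
    (hw : ∀ a b, A a b → 0 ≤ wArc A X Y a b) : ∃ P : Fin k → DirPath A, IsDPM X Y P := by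
  induction k generalizing X Y with
  | zero =>
    rw [card_eq_zero.mp hX, card_eq_zero.mp hY]
    exact ⟨Fin.elim0, fun i => i.elim0, fun i => i.elim0, by simp, by simp⟩
  | succ k ih =>
    have hXY : X.card = Y.card := hX.trans hY.symm
    obtain ⟨y, hy⟩ := card_pos.mp (show 0 < Y.card by omega)
    obtain ⟨p, hpX, rfl⟩ := hT.exists_positivePath_to hXY hw hy
    obtain ⟨P, hP⟩ := ih
      (by rw [card_erase_of_mem hpX, hX]; rfl) (by rw [card_erase_of_mem hy, hY]; rfl)
      fun a b hab => hT.wArc_erase_erase_nonneg hw p hpX hy hab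
    exact ⟨Fin.cons (p.mapLe fun _ _ h => h.1) P, hP.cons hpX hy⟩

lemma wArc_nonneg_of_isDPM (hT : IsPolytree A) {k : ℕ} {P : Fin k → DirPath A}
    (hP : IsDPM X Y P) {a b : V} (hab : A a b) : 0 ≤ wArc A X Y a b := by
  rw [wArc, sub_nonneg, Nat.cast_le, hP.card_filter_src, hP.card_filter_snk]
  exact card_le_card fun i hi => mem_filter.mpr
    ⟨mem_univ i, hT.src_inCminus_of_snk hab (P i) (mem_filter.mp hi).2⟩

end IsPolytree

end Flow

/-- In a polytree, there is a directed path matching from `X` to `Y`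
iff `w(e; X, Y) ≥ 0` for every arc `e`. -/
theorem stmt_1 [Fintype V] [DecidableEq V] (A : V → V → Prop) (hT : IsPolytree A)
    (X Y : Finset V) (hcard : X.card = Y.card) :
    (∃ P : Fin X.card → DirPath A, IsDPM X Y P) ↔
      ∀ a b, A a b → 0 ≤ wArc A X Y a b :=
  ⟨fun ⟨_, hP⟩ _ _ hab => hT.wArc_nonneg_of_isDPM hP hab,
    hT.exists_isDPM rfl hcard.symm⟩
end

section
/- Let T = (V, A) be a polytree and let I⁰, Iᵗ be independent sets in T with |I⁰| = |Iᵗ|. If there exists an arc e ∈ A with w(e; I⁰, Iᵗ) < 0 (where w(e; X, Y) = |C⁻_e ∩ X| − |C⁻_e ∩ Y|), then I⁰ is not reconfigurable into Iᵗ under directed token sliding. -/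
open scoped Classical

variable {V : Type*}

private lemma incm_back (A : V → V → Prop) (hloop : ∀ v, ¬ A v v)
    (hanti : ∀ u v, A u v → ¬ A v u) (a b : V) (hab : A a b)
    (u v : V) (huv : A u v) (hv : InCminus A a b v) : InCminus A a b u := by
  by_contra hu
  have hne : v ≠ u := fun h => hloop u (h ▸ huv)
  have hadj : (underlying A).Adj v u := by
    rw [underlying, SimpleGraph.fromRel_adj]
    exact ⟨hne, Or.inr huv⟩
  have hedge : s(v, u) = s(a, b) := by
    by_contra hse
    have : ((underlying A).deleteEdges {s(a, b)}).Adj v u := by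
      rw [SimpleGraph.deleteEdges_adj]
      exact ⟨hadj, fun h => hse (Set.mem_singleton_iff.mp h)⟩
    exact hu (hv.trans this.reachable)
  rw [Sym2.eq_iff] at hedge
  rcases hedge with ⟨hva, hub⟩ | ⟨hvb, hua⟩
  · exact hanti a b hab (hva ▸ hub ▸ huv)
  · exact hu (hua ▸ SimpleGraph.Reachable.refl a)

private lemma step_mono [Fintype V] [DecidableEq V] (A : V → V → Prop)
    (hloop : ∀ v, ¬ A v v) (hanti : ∀ u v, A u v → ¬ A v u) (a b : V) (hab : A a b)
    (I J : Finset V) (hstep : IsStep A I J) :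
    (J.filter fun x => InCminus A a b x).card ≤
      (I.filter fun x => InCminus A a b x).card := by
  obtain ⟨u, v, huv, hIJ, hJI⟩ := hstep
  have huIJ : u ∈ I \ J := hIJ ▸ Finset.mem_singleton_self u
  have hvJI : v ∈ J \ I := hJI ▸ Finset.mem_singleton_self v
  rw [Finset.mem_sdiff] at huIJ hvJI
  by_cases hvC : InCminus A a b v
  · -- then u ∈ C as well
    have huC : InCminus A a b u := incm_back A hloop hanti a b hab u v huv hvC
    have hsub : J.filter (fun x => InCminus A a b x) ⊆
        insert v ((I.filter fun x => InCminus A a b x).erase u) := by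
      intro x hx
      rw [Finset.mem_filter] at hx
      by_cases hxv : x = v
      · subst hxv; exact Finset.mem_insert_self _ _
      · have hxI : x ∈ I := by
          by_contra hxI
          have : x ∈ J \ I := Finset.mem_sdiff.mpr ⟨hx.1, hxI⟩
          rw [hJI, Finset.mem_singleton] at this
          exact hxv this
        have hxu : x ≠ u := fun h => huIJ.2 (h ▸ hx.1)
        exact Finset.mem_insert_of_mem
          (Finset.mem_erase.mpr ⟨hxu, Finset.mem_filter.mpr ⟨hxI, hx.2⟩⟩)
    calc (J.filter fun x => InCminus A a b x).card
        ≤ (insert v ((I.filter fun x => InCminus A a b x).erase u)).card :=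
          Finset.card_le_card hsub
      _ ≤ ((I.filter fun x => InCminus A a b x).erase u).card + 1 :=
          Finset.card_insert_le _ _
      _ = (I.filter fun x => InCminus A a b x).card := by
          rw [Finset.card_erase_of_mem ((Finset.mem_filter.mpr ⟨huIJ.1, huC⟩ : u ∈ I.filter fun x => InCminus A a b x))]
          have : 1 ≤ (I.filter fun x => InCminus A a b x).card :=
            Finset.card_pos.mpr ⟨u, (Finset.mem_filter.mpr ⟨huIJ.1, huC⟩ : u ∈ I.filter fun x => InCminus A a b x)⟩
          omega
  · apply Finset.card_le_card
    intro x hx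
    rw [Finset.mem_filter] at hx ⊢
    refine ⟨?_, hx.2⟩
    by_contra hxI
    have : x ∈ J \ I := Finset.mem_sdiff.mpr ⟨hx.1, hxI⟩
    rw [hJI, Finset.mem_singleton] at this
    exact hvC (this ▸ hx.2)

/-- If some arc has `w(e; I⁰, Iᵗ) < 0`, the instance is not reconfigurable. -/
theorem stmt_2 [Fintype V] [DecidableEq V] (A : V → V → Prop) (hT : IsPolytree A)
    (I0 It : Finset V) (h0 : IndepF A I0) (ht : IndepF A It) (hcard : I0.card = It.card)
    (a b : V) (hab : A a b) (hneg : wArc A I0 It a b < 0) :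
    ¬ Reconfigurable A I0 It := by
  rintro ⟨ℓ, f, ⟨hind, hstep⟩, hf0, hfl⟩
  obtain ⟨hloop, hanti, _⟩ := hT
  have mono : ∀ n : ℕ, (hn : n ≤ ℓ) →
      ((f ⟨n, by omega⟩).filter fun x => InCminus A a b x).card ≤
        ((f 0).filter fun x => InCminus A a b x).card := by
    intro n
    induction n with
    | zero => intro _; rfl
    | succ m ih =>
      intro hn
      have h1 := step_mono A hloop hanti a b hab _ _ (hstep ⟨m, by omega⟩)
      have hc : (⟨m, by omega⟩ : Fin ℓ).castSucc = (⟨m, by omega⟩ : Fin (ℓ + 1)) := rfl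
      have hs : (⟨m, by omega⟩ : Fin ℓ).succ = (⟨m + 1, by omega⟩ : Fin (ℓ + 1)) := rfl
      rw [hc, hs] at h1
      exact le_trans h1 (ih (by omega))
  have hfin : ((f (Fin.last ℓ)).filter fun x => InCminus A a b x).card ≤
      ((f 0).filter fun x => InCminus A a b x).card := by
    have := mono ℓ le_rfl
    simpa [Fin.last] using this
  rw [hf0, hfl] at hfin
  rw [wArc] at hneg
  omega
end

section
/- Let T = (V, A) be a polytree and let I⁰, Iᵗ be independent sets in T with |I⁰| = |Iᵗ|. If I⁰ is reconfigurable into Iᵗ under directed token sliding, then every reconfiguration sequence from I⁰ to Iᵗ has the same length, namely the sum over all arcs e ∈ A of w(e; I⁰, Iᵗ) = |C⁻_e ∩ I⁰| − |C⁻_e ∩ Iᵗ|. -/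
open scoped Classical

variable {V : Type*}

/-!
Put `Φ(I) = ∑_e |C⁻_e ∩ I|`, the sum over all arcs `e`, so that
`∑_e w(e; I⁰, Iᵗ) = Φ(I⁰) - Φ(Iᵗ)`. Sliding a token along an arc `(u, v)` lowers `Φ` by exactly
one: the arc `(u, v)` is a bridge, so `u` leaves `C⁻_(u,v)` and `v` does not enter it, while for
every other arc `e` the edge `uv` survives in `T - e`, so `u` and `v` lie on the same side of `e`.
Hence every reconfiguration sequence has length `Φ(I⁰) - Φ(Iᵗ)`.
-/

lemma Finset.intCast_card_filter_sub_of_exchange [DecidableEq V] {I J : Finset V} {u v : V}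
    (hIJ : I \ J = {u}) (hJI : J \ I = {v}) (P : V → Prop) [DecidablePred P] :
    ((I.filter P).card : ℤ) - (J.filter P).card =
      (if P u then 1 else 0) - (if P v then 1 else 0) := by
  rw [Finset.natCast_card_filter, Finset.natCast_card_filter, ← Finset.sum_sdiff_sub_sum_sdiff,
    hIJ, hJI, Finset.sum_singleton, Finset.sum_singleton]

noncomputable def tailPotential [Fintype V] (A : V → V → Prop) (I : Finset V) : ℤ :=
  ∑ e ∈ Finset.univ.filter (fun e : V × V => A e.1 e.2),
    ((I.filter fun x => InCminus A e.1 e.2 x).card : ℤ)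

section Polytree

variable {A : V → V → Prop}

lemma inCminus_tail (a b : V) : InCminus A a b a :=
  SimpleGraph.Reachable.refl a

lemma IsPolytree.underlying_adj (hT : IsPolytree A) {a b : V} (hab : A a b) :
    (underlying A).Adj a b :=
  ⟨fun h => hT.1 a (h ▸ hab), Or.inl hab⟩

lemma IsPolytree.not_inCminus_head (hT : IsPolytree A) {a b : V} (hab : A a b) :
    ¬ InCminus A a b b :=
  SimpleGraph.isAcyclic_iff_forall_adj_isBridge.mp hT.2.2.isAcyclic (hT.underlying_adj hab)

lemma IsPolytree.inCminus_iff_of_ne (hT : IsPolytree A) {a b u v : V}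
    (hab : A a b) (huv : A u v) (hne : (u, v) ≠ (a, b)) :
    InCminus A a b u ↔ InCminus A a b v := by
  have hadj : ((underlying A).deleteEdges {s(a, b)}).Adj u v := by
    refine (SimpleGraph.deleteEdges_adj ..).mpr ⟨hT.underlying_adj huv, ?_⟩
    rintro (h : s(u, v) = s(a, b))
    rcases Sym2.eq_iff.mp h with ⟨rfl, rfl⟩ | ⟨rfl, rfl⟩
    · exact hne rfl
    · exact hT.2.1 _ _ hab huv
  exact ⟨fun h => h.trans hadj.reachable, fun h => h.trans hadj.symm.reachable⟩

variable [Fintype V] [DecidableEq V]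

lemma sum_wArc_eq_tailPotential_sub (X Y : Finset V) :
    ∑ e ∈ Finset.univ.filter (fun e : V × V => A e.1 e.2), wArc A X Y e.1 e.2 =
      tailPotential A X - tailPotential A Y :=
  Finset.sum_sub_distrib ..

lemma IsPolytree.tailPotential_sub_of_isStep (hT : IsPolytree A) {I J : Finset V}
    (h : IsStep A I J) : tailPotential A I - tailPotential A J = 1 := by
  obtain ⟨u, v, huv, hIJ, hJI⟩ := h
  have hterm : ∀ e ∈ Finset.univ.filter (fun e : V × V => A e.1 e.2),
      ((I.filter fun x => InCminus A e.1 e.2 x).card : ℤ) -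
        (J.filter fun x => InCminus A e.1 e.2 x).card = if e = (u, v) then 1 else 0 := by
    rintro ⟨a, b⟩ he
    have hab : A a b := (Finset.mem_filter.mp he).2
    rw [Finset.intCast_card_filter_sub_of_exchange hIJ hJI]
    by_cases heq : (a, b) = (u, v)
    · obtain ⟨rfl, rfl⟩ := Prod.ext_iff.mp heq
      simp [inCminus_tail, hT.not_inCminus_head hab]
    · simp only [hT.inCminus_iff_of_ne hab huv (Ne.symm heq), if_neg heq]
      split_ifs <;> simp
  rw [tailPotential, tailPotential, ← Finset.sum_sub_distrib, Finset.sum_congr rfl hterm,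
    Finset.sum_ite_eq']
  simp [huv]

lemma IsPolytree.tailPotential_sub_eq_length (hT : IsPolytree A) {ℓ : ℕ}
    (f : Fin (ℓ + 1) → Finset V) (hstep : ∀ i : Fin ℓ, IsStep A (f i.castSucc) (f i.succ)) :
    tailPotential A (f 0) - tailPotential A (f (Fin.last ℓ)) = ℓ := by
  induction ℓ with
  | zero => simp
  | succ n ih =>
    have hinit := ih (fun i => f i.castSucc) fun i => by
      simpa only [Fin.succ_castSucc] using hstep i.castSucc
    have hlast := hT.tailPotential_sub_of_isStep (hstep (Fin.last n))
    simp only [Fin.castSucc_zero, Fin.succ_last] at hinit hlast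
    push_cast
    linarith

end Polytree

theorem stmt_3_general [Fintype V] [DecidableEq V] (A : V → V → Prop) (hT : IsPolytree A)
    (I0 It : Finset V)
    {ℓ : ℕ} (f : Fin (ℓ + 1) → Finset V) (hf : IsReconfSeq A f)
    (hstart : f 0 = I0) (hend : f (Fin.last ℓ) = It) :
    (ℓ : ℤ) = ∑ e ∈ Finset.univ.filter (fun e : V × V => A e.1 e.2),
      wArc A I0 It e.1 e.2 := by
  rw [sum_wArc_eq_tailPotential_sub, ← hstart, ← hend, hT.tailPotential_sub_eq_length f hf.2]

/-- Every reconfiguration sequence from `I⁰` to `Iᵗ` has the same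
length, namely `∑_{e ∈ A} w(e; I⁰, Iᵗ)`. -/
theorem stmt_3 [Fintype V] [DecidableEq V] (A : V → V → Prop) (hT : IsPolytree A)
    (I0 It : Finset V) (h0 : IndepF A I0) (ht : IndepF A It) (hcard : I0.card = It.card)
    {ℓ : ℕ} (f : Fin (ℓ + 1) → Finset V) (hf : IsReconfSeq A f)
    (hstart : f 0 = I0) (hend : f (Fin.last ℓ) = It) :
    (ℓ : ℤ) = ∑ e ∈ Finset.univ.filter (fun e : V × V => A e.1 e.2),
      wArc A I0 It e.1 e.2 :=
  stmt_3_general A hT I0 It f hf hstart hend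
end

section
/- Let T be a polytree and let P = {P₁, …, P_k} be a set of directed paths satisfying the path-set conditions (each path of length ≥ 2, a directed path matching from I⁰ to Iᵗ, distinct second vertices, distinct second-to-last vertices) for independent sets I⁰, Iᵗ. Then there exists a set P' of directed paths satisfying the path-set conditions that contains no biased path pair. -/
open scoped Classical

variable {V : Type*}

namespace DirPath
variable {A : V → V → Prop}

/-- Subpath of a directed path from index `i` to index `j`. -/
def seg (p : DirPath A) (i j : ℕ) (hij : i ≤ j) (hj : j ≤ p.len) : DirPath A where
  len := j - i
  vtx := fun m => p.vtx ⟨i + (m : ℕ), by have := m.isLt; omega⟩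
  inj := by
    intro m m' h
    have h2 := congrArg Fin.val (p.inj h)
    simp only at h2
    exact Fin.ext (by omega)
  arc := fun m => p.arc ⟨i + (m : ℕ), by have := m.isLt; omega⟩

lemma seg_src (p : DirPath A) (i j : ℕ) (hij : i ≤ j) (hj : j ≤ p.len) :
    (p.seg i j hij hj).src = p.vtx ⟨i, by omega⟩ := rfl

lemma seg_snk (p : DirPath A) (i j : ℕ) (hij : i ≤ j) (hj : j ≤ p.len) :
    (p.seg i j hij hj).snk = p.vtx ⟨j, by omega⟩ := by
  have h0 : (p.seg i j hij hj).snk = p.vtx ⟨i + (j - i), by omega⟩ := rfl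
  rw [h0]
  congr 1
  exact Fin.ext (by simp; omega)

/-- Conversion to an undirected walk. -/
def toWalkAux : (n : ℕ) → (p : DirPath A) → p.len = n → (underlying A).Walk p.src p.snk
  | 0, p, h =>
      (SimpleGraph.Walk.nil (G := underlying A) (u := p.src)).copy rfl
        (by show p.vtx _ = p.vtx _; congr 1; exact Fin.ext (by simp [Fin.last, h]))
  | n + 1, p, h => by
      refine SimpleGraph.Walk.cons (v := (p.seg 1 p.len (by omega) le_rfl).src) ?_
        ((toWalkAux n (p.seg 1 p.len (by omega) le_rfl) (by simp [seg]; omega)).copy rfl ?_)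
      · rw [seg_src]
        refine SimpleGraph.fromRel_adj A _ _ |>.2 ⟨?_, Or.inl (p.arc ⟨0, by omega⟩)⟩
        intro hc
        have := congrArg Fin.val (p.inj hc)
        simp at this
      · rw [seg_snk]
        show p.vtx _ = p.vtx _
        congr 1

lemma toWalkAux_support : ∀ (n : ℕ) (p : DirPath A) (h : p.len = n),
    (toWalkAux n p h).support = List.ofFn p.vtx
  | 0, p, h => by
      have h1 : List.ofFn p.vtx = [p.src] := by
        refine List.ext_getElem (by simp [h]) ?_
        intro m h1 h2
        simp only [List.length_ofFn, h] at h1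
        interval_cases m
        · simp [List.getElem_ofFn]; rfl
      rw [h1]
      simp [toWalkAux]
  | n + 1, p, h => by
      rw [toWalkAux]
      simp only [SimpleGraph.Walk.support_cons, SimpleGraph.Walk.support_copy]
      rw [toWalkAux_support n _ _]
      refine (List.ext_getElem (by simp [seg]; omega) ?_).symm
      intro m h1 h2
      match m with
      | 0 => simp only [List.getElem_ofFn, List.getElem_cons_zero]; rfl
      | Nat.succ m =>
        simp only [List.getElem_ofFn, List.getElem_cons_succ, List.getElem_ofFn]
        show p.vtx _ = p.vtx _
        congr 1
        exact Fin.ext (by simp; omega)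

lemma toWalkAux_isPath (n : ℕ) (p : DirPath A) (h : p.len = n) :
    (toWalkAux n p h).IsPath := by
  rw [SimpleGraph.Walk.isPath_def, toWalkAux_support]
  exact List.nodup_ofFn.2 p.inj

/-- Uniqueness of directed paths in a polytree: vertex sequences coincide. -/
lemma vtx_unique (hT : IsPolytree A) (p q : DirPath A)
    (h1 : p.src = q.src) (h2 : p.snk = q.snk) :
    List.ofFn p.vtx = List.ofFn q.vtx := by
  have hu := SimpleGraph.isAcyclic_iff_path_unique.1 hT.2.2.IsAcyclic
  have h := hu ⟨toWalkAux p.len p rfl, toWalkAux_isPath _ _ _⟩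
    ⟨(toWalkAux q.len q rfl).copy h1.symm h2.symm,
      (SimpleGraph.Walk.isPath_copy _ _ _).2 (toWalkAux_isPath _ _ _)⟩
  have := congrArg (fun w : (underlying A).Path p.src p.snk => w.1.support) h
  simpa [toWalkAux_support] using this

lemma len_unique (hT : IsPolytree A) (p q : DirPath A)
    (h1 : p.src = q.src) (h2 : p.snk = q.snk) : p.len = q.len := by
  have := congrArg List.length (vtx_unique hT p q h1 h2)
  simpa using this

/-- No antiparallel directed paths in a polytree. -/
lemma no_two_way (hT : IsPolytree A) (p q : DirPath A)
    (h1 : p.src = q.snk) (h2 : p.snk = q.src) (hp : 0 < p.len) : False := by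
  have hne : p.src ≠ p.snk := by
    intro hc
    have := congrArg Fin.val (p.inj (show p.vtx 0 = p.vtx (Fin.last p.len) from hc))
    simp [Fin.last] at this; omega
  have hq : 0 < q.len := by
    rcases Nat.eq_zero_or_pos q.len with h0 | h; swap; · exact h
    exfalso; apply hne
    have : q.src = q.snk := by
      show q.vtx _ = q.vtx _; congr 1; exact Fin.ext (by simp [Fin.last, h0])
    rw [h1, h2, this]
  have hu := SimpleGraph.isAcyclic_iff_path_unique.1 hT.2.2.IsAcyclic
  have h := hu ⟨toWalkAux p.len p rfl, toWalkAux_isPath _ _ _⟩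
    ⟨((toWalkAux q.len q rfl).reverse).copy h1.symm h2.symm,
      (SimpleGraph.Walk.isPath_copy _ _ _).2 ((toWalkAux_isPath _ _ _).reverse)⟩
  have hs := congrArg (fun w : (underlying A).Path p.src p.snk => w.1.support) h
  simp only [SimpleGraph.Walk.support_copy, SimpleGraph.Walk.support_reverse,
    toWalkAux_support] at hs
  -- compare entries at index 1
  have hl : (List.ofFn p.vtx).length = p.len + 1 := by simp
  have hl2 : ((List.ofFn q.vtx).reverse).length = q.len + 1 := by simp
  have hlen : p.len = q.len := by
    have := congrArg List.length hs; simpa using this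
  have he : (List.ofFn p.vtx)[1]'(by omega) = ((List.ofFn q.vtx).reverse)[1]'(by omega) :=
    List.getElem_of_eq hs _
  rw [List.getElem_reverse] at he
  simp only [List.getElem_ofFn] at he
  -- he : p.vtx ⟨1,_⟩ = q.vtx ⟨q.len + 1 - 1 - 1, _⟩
  have a1 : A (p.vtx ⟨0, by omega⟩) (p.vtx ⟨1, by omega⟩) := p.arc ⟨0, hp⟩
  have a2 : A (q.vtx ⟨q.len - 1, by omega⟩) (q.vtx ⟨q.len, by omega⟩) := by
    have harc := q.arc ⟨q.len - 1, by omega⟩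
    have e : ((⟨q.len - 1, by omega⟩ : Fin q.len)).succ = (⟨q.len, by omega⟩ : Fin (q.len + 1)) :=
      Fin.ext (by simp; omega)
    rw [e] at harc
    exact harc
  have e0 : p.vtx ⟨0, by omega⟩ = q.vtx ⟨q.len, by omega⟩ := by
    rw [show (⟨0, by omega⟩ : Fin (p.len+1)) = 0 from rfl,
      show (⟨q.len, by omega⟩ : Fin (q.len+1)) = Fin.last q.len from rfl]
    rw [(show p.vtx 0 = p.src from rfl), h1]; rfl
  have e1 : p.vtx ⟨1, by omega⟩ = q.vtx ⟨q.len - 1, by omega⟩ := by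
    rw [he]; congr 1; exact Fin.ext (by simp)
  rw [e0, e1] at a1
  exact hT.2.1 _ _ a1 a2

/-- Distance between two vertices on a directed path equals the index difference. -/
lemma ddist_seg (hT : IsPolytree A) (p : DirPath A) (i j : ℕ) (hij : i ≤ j) (hj : j ≤ p.len) :
    ddist A (p.vtx ⟨i, by omega⟩) (p.vtx ⟨j, by omega⟩) = j - i := by
  set s := p.seg i j hij hj with hsdef
  have hmem : j - i ∈ {n | ∃ r : DirPath A, r.src = p.vtx ⟨i, by omega⟩ ∧
      r.snk = p.vtx ⟨j, by omega⟩ ∧ r.len = n} :=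
    ⟨s, seg_src .., seg_snk .., rfl⟩
  have hall : ∀ n ∈ {n | ∃ r : DirPath A, r.src = p.vtx ⟨i, by omega⟩ ∧
      r.snk = p.vtx ⟨j, by omega⟩ ∧ r.len = n}, n = j - i := by
    rintro n ⟨r, hr1, hr2, rfl⟩
    have := len_unique hT r s (by rw [hr1, seg_src]) (by rw [hr2, seg_snk])
    simpa [hsdef, seg] using this
  exact le_antisymm (Nat.sInf_le hmem)
    (le_of_eq (hall _ (Nat.sInf_mem ⟨_, hmem⟩)).symm)

end DirPath
namespace DirPath
variable {A : V → V → Prop}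

/-- Splice: prefix of `p` up to index `a`, then suffix of `q` from index `b`. -/
def splice (hT : IsPolytree A) (p q : DirPath A) (a b : ℕ)
    (ha2 : a ≤ p.len) (hb2 : b < q.len)
    (hx : p.vtx ⟨a, by omega⟩ = q.vtx ⟨b, by omega⟩) : DirPath A where
  len := a + (q.len - b)
  vtx := fun m => if h : (m : ℕ) ≤ a then p.vtx ⟨m, by omega⟩
    else q.vtx ⟨b + ((m : ℕ) - a), by have := m.isLt; omega⟩
  inj := by
    intro m m' hmm
    dsimp only at hmm
    by_cases h : (m : ℕ) ≤ a <;> by_cases h' : (m' : ℕ) ≤ a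
    · rw [dif_pos h, dif_pos h'] at hmm
      have := congrArg Fin.val (p.inj hmm)
      exact Fin.ext (by simpa using this)
    · exfalso
      rw [dif_pos h, dif_neg h'] at hmm
      rcases eq_or_lt_of_le h with he | hlt
      · have : p.vtx ⟨(m : ℕ), by omega⟩ = p.vtx ⟨a, by omega⟩ := by congr 1; exact Fin.ext he
        rw [this, hx] at hmm
        have := congrArg Fin.val (q.inj hmm)
        simp at this; omega
      · refine no_two_way hT (p.seg m a (le_of_lt hlt) ha2)
          (q.seg b (b + ((m' : ℕ) - a)) (by omega) (by have := m'.isLt; omega)) ?_ ?_ (by simp [seg]; omega)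
        · rw [seg_src, seg_snk]; exact hmm
        · rw [seg_snk, seg_src]; exact hx
    · exfalso
      rw [dif_neg h, dif_pos h'] at hmm
      rcases eq_or_lt_of_le h' with he | hlt
      · have : p.vtx ⟨(m' : ℕ), by omega⟩ = p.vtx ⟨a, by omega⟩ := by congr 1; exact Fin.ext he
        rw [this, hx] at hmm
        have := congrArg Fin.val (q.inj hmm.symm)
        simp at this; omega
      · refine no_two_way hT (p.seg m' a (le_of_lt hlt) ha2)
          (q.seg b (b + ((m : ℕ) - a)) (by omega) (by have := m.isLt; omega)) ?_ ?_ (by simp [seg]; omega)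
        · rw [seg_src, seg_snk]; exact hmm.symm
        · rw [seg_snk, seg_src]; exact hx
    · rw [dif_neg h, dif_neg h'] at hmm
      have := congrArg Fin.val (q.inj hmm)
      simp only at this
      exact Fin.ext (by omega)
  arc := by
    intro m
    have hm := m.isLt
    rcases lt_trichotomy (m : ℕ) a with hlt | heq | hgt
    · have c1 : ((m.castSucc : Fin _) : ℕ) ≤ a := by simpa using le_of_lt hlt
      have c2 : ((m.succ : Fin _) : ℕ) ≤ a := by simpa using hlt
      rw [dif_pos c1, dif_pos c2]
      exact p.arc ⟨(m : ℕ), by omega⟩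
    · have c1 : ((m.castSucc : Fin _) : ℕ) ≤ a := by simpa using le_of_eq heq
      have c2 : ¬ ((m.succ : Fin _) : ℕ) ≤ a := by simp; omega
      rw [dif_pos c1, dif_neg c2]
      have e1 : p.vtx ⟨((m.castSucc : Fin _) : ℕ), by omega⟩ = q.vtx ⟨b, by omega⟩ := by
        rw [← hx]; congr 1; exact Fin.ext (by simpa using heq)
      rw [e1]
      have harc := q.arc ⟨b, hb2⟩
      have e2 : ((⟨b, hb2⟩ : Fin q.len)).succ
          = (⟨b + ((m.succ : Fin _) : ℕ) - a, by omega⟩ : Fin (q.len + 1)) :=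
        Fin.ext (by simp; omega)
      rw [e2] at harc
      have e3 : q.vtx ⟨b + (((m.succ : Fin _) : ℕ) - a), by have := m.isLt; omega⟩
          = q.vtx ⟨b + ((m.succ : Fin _) : ℕ) - a, by omega⟩ := by
        congr 1; exact Fin.ext (by simp; omega)
      rw [e3]
      exact harc
    · have c1 : ¬ ((m.castSucc : Fin _) : ℕ) ≤ a := by simp; omega
      have c2 : ¬ ((m.succ : Fin _) : ℕ) ≤ a := by simp; omega
      rw [dif_neg c1, dif_neg c2]
      have harc := q.arc ⟨b + ((m : ℕ) - a), by omega⟩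
      have e2 : ((⟨b + ((m : ℕ) - a), by omega⟩ : Fin q.len)).succ
          = (⟨b + (((m.succ : Fin _) : ℕ) - a), by omega⟩ : Fin (q.len + 1)) :=
        Fin.ext (by simp; omega)
      rw [e2] at harc
      exact harc

variable {hT : IsPolytree A} {p q : DirPath A} {a b : ℕ}
  {ha2 : a ≤ p.len} {hb2 : b < q.len} {hx : p.vtx ⟨a, by omega⟩ = q.vtx ⟨b, by omega⟩}

lemma splice_len : (splice hT p q a b ha2 hb2 hx).len = a + (q.len - b) := rfl

lemma splice_vtx_le (m : Fin ((splice hT p q a b ha2 hb2 hx).len + 1)) (h : (m : ℕ) ≤ a) :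
    (splice hT p q a b ha2 hb2 hx).vtx m = p.vtx ⟨(m : ℕ), by omega⟩ := dif_pos h

lemma splice_vtx_gt (m : Fin ((splice hT p q a b ha2 hb2 hx).len + 1)) (h : ¬ (m : ℕ) ≤ a) :
    (splice hT p q a b ha2 hb2 hx).vtx m
      = q.vtx ⟨b + ((m : ℕ) - a), by
          have hm : (m : ℕ) < a + (q.len - b) + 1 := m.isLt
          omega⟩ := dif_neg h

lemma splice_src : (splice hT p q a b ha2 hb2 hx).src = p.src := by
  show (splice hT p q a b ha2 hb2 hx).vtx 0 = p.vtx 0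
  rw [splice_vtx_le 0 (by show 0 ≤ a; omega)]
  congr 1

lemma splice_snk : (splice hT p q a b ha2 hb2 hx).snk = q.snk := by
  show (splice hT p q a b ha2 hb2 hx).vtx (Fin.last _) = q.vtx (Fin.last _)
  rw [splice_vtx_gt (Fin.last _) (by show ¬ a + (q.len - b) ≤ a; omega)]
  congr 1
  exact Fin.ext (show b + (a + (q.len - b) - a) = q.len by omega)

lemma splice_sndVtx (ha1 : 1 ≤ a) (hp : 1 ≤ p.len) :
    (splice hT p q a b ha2 hb2 hx).sndVtx = p.sndVtx := by
  show (splice hT p q a b ha2 hb2 hx).vtx _ = p.vtx _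
  rw [splice_vtx_le _ (by show min 1 (a + (q.len - b)) ≤ a; omega)]
  congr 1
  exact Fin.ext (show min 1 (a + (q.len - b)) = min 1 p.len by omega)

lemma splice_penVtx (hb1 : 1 ≤ b) :
    (splice hT p q a b ha2 hb2 hx).penVtx = q.penVtx := by
  show (splice hT p q a b ha2 hb2 hx).vtx _ = q.vtx _
  rcases Nat.lt_or_ge (a + (q.len - b) - 1) (a + 1) with hc | hc
  · rw [splice_vtx_le _ (by show a + (q.len - b) - 1 ≤ a; omega)]
    refine Eq.trans ?_ (Eq.trans hx ?_)
    · congr 1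
      exact Fin.ext (show a + (q.len - b) - 1 = a by omega)
    · congr 1
      exact Fin.ext (show b = q.len - 1 by omega)
  · rw [splice_vtx_gt _ (by show ¬ a + (q.len - b) - 1 ≤ a; omega)]
    congr 1
    exact Fin.ext (show b + (a + (q.len - b) - 1 - a) = q.len - 1 by omega)

end DirPath
lemma image_comp_perm {k : ℕ} {β : Type*} [DecidableEq β] (f : Fin k → β) (σ : Equiv.Perm (Fin k)) :
    Finset.univ.image (fun m => f (σ m)) = Finset.univ.image f := by
  ext y
  simp only [Finset.mem_image, Finset.mem_univ, true_and]
  constructor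
  · rintro ⟨m, hm⟩; exact ⟨σ m, hm⟩
  · rintro ⟨m, hm⟩; exact ⟨σ.symm m, by simpa using hm⟩

lemma sq_lem (X Y c d : ℕ) (h1 : X + Y = c + d) (h2 : d < X) (h3 : d < Y) :
    X * X + Y * Y < c * c + d * d := by
  obtain ⟨s, rfl⟩ : ∃ s, X = d + s + 1 := ⟨X - d - 1, by omega⟩
  obtain ⟨t, rfl⟩ : ∃ t, Y = d + t + 1 := ⟨Y - d - 1, by omega⟩
  have hc : c = d + s + t + 2 := by omega
  subst hc
  nlinarith

theorem stmt_9' [Fintype V] [DecidableEq V] (A : V → V → Prop) (hT : IsPolytree A)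
    (I0 It : Finset V) (h0 : IndepF A I0) (ht : IndepF A It)
    {k : ℕ} (P : Fin k → DirPath A) (hP : PathSetConds I0 It P) :
    ∃ Q : Fin k → DirPath A, PathSetConds I0 It Q ∧
      ∀ i j, ¬ BiasedPair A (Q i) (Q j) := by
  classical
  set S : Set ℕ := {n | ∃ Q : Fin k → DirPath A, PathSetConds I0 It Q ∧
    (∑ m, (Q m).len * (Q m).len) = n} with hS
  have hne : S.Nonempty := ⟨_, P, hP, rfl⟩
  obtain ⟨Q, hQ, hQn⟩ := Nat.sInf_mem hne
  refine ⟨Q, hQ, ?_⟩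
  intro i j hbias
  obtain ⟨x, hxi, hxj, hd1, hd2⟩ := hbias
  have hij : i ≠ j := by rintro rfl; exact lt_irrefl _ hd1
  obtain ⟨h1, ⟨hsinj, htinj, hsim, htim⟩, h3, h4⟩ := hQ
  set p := Q i with hp
  set q := Q j with hq
  have hplen : 2 ≤ p.len := by rw [hp]; exact h1 i
  have hqlen : 2 ≤ q.len := by rw [hq]; exact h1 j
  obtain ⟨ia, hia, hia0, hialast⟩ := hxi
  obtain ⟨ib, hib, hib0, hiblast⟩ := hxj
  set a : ℕ := (ia : ℕ) with hadef
  set b : ℕ := (ib : ℕ) with hbdef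
  have ha1 : 1 ≤ a := by
    rcases Nat.eq_zero_or_pos a with h | h
    · exact absurd (Fin.ext (by simp [← hadef, h]) : ia = 0) hia0
    · exact h
  have halt : a < p.len := by
    have := ia.isLt
    rcases Nat.lt_or_ge a p.len with h | h
    · exact h
    · exact absurd (Fin.ext (by simp [← hadef, Fin.last]; omega) : ia = Fin.last p.len) hialast
  have hb1 : 1 ≤ b := by
    rcases Nat.eq_zero_or_pos b with h | h
    · exact absurd (Fin.ext (by simp [← hbdef, h]) : ib = 0) hib0
    · exact h
  have hblt : b < q.len := by
    have := ib.isLt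
    rcases Nat.lt_or_ge b q.len with h | h
    · exact h
    · exact absurd (Fin.ext (by simp [← hbdef, Fin.last]; omega) : ib = Fin.last q.len) hiblast
  -- identify ddist with indices
  have eQ0 : ∀ (r : DirPath A) (c : ℕ) (hc : c < r.len + 1) (hx' : r.vtx ⟨c, hc⟩ = x),
      ddist A r.src x = c ∧ ddist A x r.snk = r.len - c := by
    intro r c hc hx'
    constructor
    · have h := DirPath.ddist_seg hT r 0 c (Nat.zero_le _) (by omega)
      have e0 : r.vtx ⟨0, by omega⟩ = r.src := by
        show r.vtx _ = r.vtx _; congr 1 <;> exact Fin.ext (by simp)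
      rw [e0, show r.vtx ⟨c, by omega⟩ = x from hx'] at h
      simpa using h
    · have h := DirPath.ddist_seg hT r c r.len (by omega) le_rfl
      have e0 : r.vtx ⟨r.len, by omega⟩ = r.snk := by
        show r.vtx _ = r.vtx _; congr 1 <;> exact Fin.ext (by simp [Fin.last])
      rw [e0, show r.vtx ⟨c, by omega⟩ = x from hx'] at h
      exact h
  have ep := eQ0 p a ia.isLt (by rw [show (⟨a, ia.isLt⟩ : Fin (p.len + 1)) = ia from Fin.ext rfl]; exact hia)
  have eq' := eQ0 q b ib.isLt (by rw [show (⟨b, ib.isLt⟩ : Fin (q.len + 1)) = ib from Fin.ext rfl]; exact hib)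
  rw [ep.1, eq'.1] at hd1
  rw [ep.2, eq'.2] at hd2
  -- hd1 : b < a,  hd2 : q.len - b < p.len - a
  have hx' : p.vtx ⟨a, by omega⟩ = q.vtx ⟨b, by omega⟩ := by
    rw [show (⟨a, by omega⟩ : Fin (p.len + 1)) = ia from Fin.ext rfl,
      show (⟨b, by omega⟩ : Fin (q.len + 1)) = ib from Fin.ext rfl, hia, hib]
  set r : DirPath A := DirPath.splice hT p q a b (le_of_lt halt) hblt hx' with hr
  set r' : DirPath A := DirPath.splice hT q p b a (le_of_lt hblt) halt hx'.symm with hr'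
  set Q' : Fin k → DirPath A := fun m => if m = i then r else if m = j then r' else Q m with hQ'
  have hQ'i : Q' i = r := by simp [hQ']
  have hQ'j : Q' j = r' := by simp [hQ', hij.symm]
  have hQ'o : ∀ m, m ≠ i → m ≠ j → Q' m = Q m := by intro m h h'; simp [hQ', h, h']
  have hsrc : ∀ m, (Q' m).src = (Q m).src := by
    intro m
    by_cases h : m = i
    · rw [h, hQ'i, DirPath.splice_src]
    · by_cases h' : m = j
      · rw [h', hQ'j, DirPath.splice_src]
      · rw [hQ'o m h h']
  have hsnk : ∀ m, (Q' m).snk = (Q (Equiv.swap i j m)).snk := by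
    intro m
    by_cases h : m = i
    · rw [h, hQ'i, DirPath.splice_snk, Equiv.swap_apply_left]
    · by_cases h' : m = j
      · rw [h', hQ'j, DirPath.splice_snk, Equiv.swap_apply_right]
      · rw [hQ'o m h h', Equiv.swap_apply_of_ne_of_ne h h']
  have hsnd : ∀ m, (Q' m).sndVtx = (Q m).sndVtx := by
    intro m
    by_cases h : m = i
    · rw [h, hQ'i]; exact DirPath.splice_sndVtx ha1 (by omega)
    · by_cases h' : m = j
      · rw [h', hQ'j]; exact DirPath.splice_sndVtx hb1 (by omega)
      · rw [hQ'o m h h']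
  have hpen : ∀ m, (Q' m).penVtx = (Q (Equiv.swap i j m)).penVtx := by
    intro m
    by_cases h : m = i
    · rw [h, hQ'i, Equiv.swap_apply_left]; exact DirPath.splice_penVtx hb1
    · by_cases h' : m = j
      · rw [h', hQ'j, Equiv.swap_apply_right]; exact DirPath.splice_penVtx ha1
      · rw [hQ'o m h h', Equiv.swap_apply_of_ne_of_ne h h']
  have hrlen : r.len = a + (q.len - b) := rfl
  have hr'len : r'.len = b + (p.len - a) := rfl
  have hconds : PathSetConds I0 It Q' := by
    refine ⟨?_, ⟨?_, ?_, ?_, ?_⟩, ?_, ?_⟩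
    · intro m
      by_cases h : m = i
      · rw [h, hQ'i, hrlen]; omega
      · by_cases h' : m = j
        · rw [h', hQ'j, hr'len]; omega
        · rw [hQ'o m h h']; exact h1 m
    · have : (fun m => (Q' m).src) = fun m => (Q m).src := funext hsrc
      rw [this]; exact hsinj
    · have : (fun m => (Q' m).snk) = fun m => (Q (Equiv.swap i j m)).snk := funext hsnk
      rw [this]; exact htinj.comp (Equiv.injective _)
    · have : (fun m => (Q' m).src) = fun m => (Q m).src := funext hsrc
      rw [this]; exact hsim
    · have : (fun m => (Q' m).snk) = fun m => (Q (Equiv.swap i j m)).snk := funext hsnk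
      rw [this, image_comp_perm (fun m => (Q m).snk) (Equiv.swap i j)]; exact htim
    · intro m m' hne
      rw [hsnd m, hsnd m']; exact h3 m m' hne
    · intro m m' hne
      rw [hpen m, hpen m']
      exact h4 _ _ ((Equiv.injective _).ne hne)
  -- the measure strictly decreases
  have key : ∀ g : Fin k → ℕ,
      ∑ m, g m = g i + g j + ∑ m ∈ (Finset.univ.erase i).erase j, g m := by
    intro g
    have hji : j ∈ Finset.univ.erase i := Finset.mem_erase.2 ⟨hij.symm, Finset.mem_univ j⟩
    rw [← Finset.add_sum_erase _ g (Finset.mem_univ i), ← Finset.add_sum_erase _ g hji]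
    ring
  have hrest : ∑ m ∈ (Finset.univ.erase i).erase j, (Q' m).len * (Q' m).len
      = ∑ m ∈ (Finset.univ.erase i).erase j, (Q m).len * (Q m).len := by
    refine Finset.sum_congr rfl ?_
    intro m hm
    rw [Finset.mem_erase, Finset.mem_erase] at hm
    rw [hQ'o m hm.2.1 hm.1]
  have hnum : r.len * r.len + r'.len * r'.len < p.len * p.len + q.len * q.len := by
    refine sq_lem _ _ p.len q.len (by rw [hrlen, hr'len]; omega) ?_ ?_
    · rw [hrlen]; omega
    · rw [hr'len]; omega
  have hlt : ∑ m, (Q' m).len * (Q' m).len < ∑ m, (Q m).len * (Q m).len := by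
    rw [key (fun m => (Q' m).len * (Q' m).len), key (fun m => (Q m).len * (Q m).len)]
    simp only [hQ'i, hQ'j, hrest]
    rw [← hp, ← hq]
    have := hnum
    omega
  have hle : sInf S ≤ ∑ m, (Q' m).len * (Q' m).len := Nat.sInf_le ⟨Q', hconds, rfl⟩
  omega
/-- If some family of paths satisfies the path-set conditions, then
some family of paths satisfies them and contains no biased path pair. -/
theorem stmt_9 [Fintype V] [DecidableEq V] (A : V → V → Prop) (hT : IsPolytree A)
    (I0 It : Finset V) (h0 : IndepF A I0) (ht : IndepF A It)
    {k : ℕ} (P : Fin k → DirPath A) (hP : PathSetConds I0 It P) :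
    ∃ Q : Fin k → DirPath A, PathSetConds I0 It Q ∧
      ∀ i j, ¬ BiasedPair A (Q i) (Q j) := by
  exact stmt_9' A hT I0 It h0 ht P hP
end
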